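/- arXiv:2601.13087 — 3 statements merged into one kernel-verified Lean document; each statement's English description precedes it below -/
import Mathlib

section
/- Let x* ∈ ℚ^E be a nonnegative vector indexed by a finite set E, with bounds π_e ∈ ℕ≥1 for each e ∈ E, and let ρ ∈ (0,1) with ρ·π_min < 1 where π_min = min_e π_e. Partition E into X = {e : 0 < x*_e < ρ·π_min}, Y₁ = {e : ρ·π_min ≤ x*_e < 1}, Y₂ = {e : 1 ≤ x*_e < π_e}, Z = {e : x*_e = π_e}, and E₀ = {e : x*_e = 0}. Assume |X| ≤ (1/π_min)·Σ_{e∈Z} x*_e. Then Σ_{e∈E} ⌈x*_e⌉ ≤ max(1/(ρ·π_min), 2) · Σ_{e∈E} x*_e. -/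
open Finset

/-- Rounding bound for basic LP solutions, case ρ·π_min < 1. -/
theorem stmt8 {E : Type*} [Fintype E] (x : E → ℚ) (π : E → ℕ) (πmin : ℕ)
    (hx0 : ∀ e, 0 ≤ x e) (hxub : ∀ e, x e ≤ (π e : ℚ))
    (hπ1 : ∀ e, 1 ≤ π e) (hπmin : ∀ e, πmin ≤ π e) (hπmin1 : 1 ≤ πmin)
    (ρ : ℚ) (hρ0 : 0 < ρ) (hρ1 : ρ < 1) (hsmall : ρ * (πmin : ℚ) < 1)
    (hX : ((Finset.univ.filter fun e => 0 < x e ∧ x e < ρ * (πmin : ℚ)).card : ℚ) ≤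
        (1 / (πmin : ℚ)) * ∑ e ∈ Finset.univ.filter (fun e => x e = (π e : ℚ)), x e) :
    (∑ e, ((⌈x e⌉ : ℤ) : ℚ)) ≤ max (1 / (ρ * (πmin : ℚ))) 2 * ∑ e, x e := by
  set M := max (1 / (ρ * (πmin : ℚ))) 2 with hM
  have hπq : (1 : ℚ) ≤ (πmin : ℚ) := by exact_mod_cast hπmin1
  have hρπ : 0 < ρ * (πmin : ℚ) := by positivity
  have hM2 : (2 : ℚ) ≤ M := le_max_right _ _
  have hMρ : 1 / (ρ * (πmin : ℚ)) ≤ M := le_max_left _ _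
  set d : E → ℚ := fun e =>
    if 0 < x e ∧ x e < ρ * (πmin : ℚ) then (-1 : ℚ)
    else if x e = (π e : ℚ) then x e else 0 with hd
  have key : ∀ e, ((⌈x e⌉ : ℤ) : ℚ) + d e ≤ M * x e := by
    intro e
    have hxe0 := hx0 e
    have hπe : (1 : ℚ) ≤ (π e : ℚ) := by exact_mod_cast hπ1 e
    have hπme : (πmin : ℚ) ≤ (π e : ℚ) := by exact_mod_cast hπmin e
    by_cases hP : 0 < x e ∧ x e < ρ * (πmin : ℚ)
    · have hc1 : ⌈x e⌉ ≤ 1 := Int.ceil_le.mpr (by push_cast; linarith [hP.2])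
      have hc2 : (0 : ℤ) < ⌈x e⌉ := Int.ceil_pos.mpr hP.1
      have hceq : ⌈x e⌉ = 1 := le_antisymm hc1 hc2
      simp only [hd, if_pos hP, hceq]
      have : 0 ≤ M * x e := mul_nonneg (by linarith) hxe0
      push_cast
      linarith
    · simp only [hd, if_neg hP]
      by_cases hZ : x e = (π e : ℚ)
      · simp only [if_pos hZ]
        have hceq : ⌈x e⌉ = (π e : ℤ) := by rw [hZ]; exact_mod_cast Int.ceil_natCast (π e)
        rw [hceq]
        have h2 : 2 * x e ≤ M * x e := mul_le_mul_of_nonneg_right hM2 hxe0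
        push_cast
        rw [← hZ]
        linarith
      · simp only [if_neg hZ]
        rcases eq_or_lt_of_le hxe0 with h0 | h0
        · rw [← h0]; simp
        · have hge : ρ * (πmin : ℚ) ≤ x e := by
            by_contra h
            exact hP ⟨h0, not_le.mp h⟩
          by_cases h1 : x e < 1
          · have hc1 : ⌈x e⌉ ≤ 1 := Int.ceil_le.mpr (by push_cast; linarith)
            have hmx : 1 ≤ 1 / (ρ * (πmin : ℚ)) * x e := by
              rw [div_mul_eq_mul_div, one_mul, le_div_iff₀ hρπ]
              linarith
            have : 1 / (ρ * (πmin : ℚ)) * x e ≤ M * x e :=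
              mul_le_mul_of_nonneg_right hMρ hxe0
            have hc1' : ((⌈x e⌉ : ℤ) : ℚ) ≤ 1 := by exact_mod_cast hc1
            linarith
          · have h1' : (1 : ℚ) ≤ x e := le_of_not_gt h1
            have hc : ((⌈x e⌉ : ℤ) : ℚ) < x e + 1 := Int.ceil_lt_add_one (x e)
            have h2 : 2 * x e ≤ M * x e := mul_le_mul_of_nonneg_right hM2 hxe0
            linarith
  have hsumkey : ∑ e, (((⌈x e⌉ : ℤ) : ℚ) + d e) ≤ ∑ e, M * x e :=
    Finset.sum_le_sum fun e _ => key e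
  have hsplit : ∑ e, (((⌈x e⌉ : ℤ) : ℚ) + d e)
      = (∑ e, ((⌈x e⌉ : ℤ) : ℚ)) + ∑ e, d e := Finset.sum_add_distrib
  have hmul : ∑ e, M * x e = M * ∑ e, x e := (Finset.mul_sum _ _ _).symm
  -- compute ∑ d
  have hdeq : ∀ e, d e = -(if 0 < x e ∧ x e < ρ * (πmin : ℚ) then (1 : ℚ) else 0)
      + (if x e = (π e : ℚ) then x e else 0) := by
    intro e
    have hπme : (πmin : ℚ) ≤ (π e : ℚ) := by exact_mod_cast hπmin e
    by_cases hP : 0 < x e ∧ x e < ρ * (πmin : ℚ)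
    · have hZ : x e ≠ (π e : ℚ) := by
        intro h
        have : x e < 1 := lt_trans hP.2 hsmall
        rw [h] at this
        linarith
      simp [hd, hP, hZ]
    · simp [hd, hP]
  have hsd : ∑ e, d e
      = -((Finset.univ.filter fun e => 0 < x e ∧ x e < ρ * (πmin : ℚ)).card : ℚ)
        + ∑ e ∈ Finset.univ.filter (fun e => x e = (π e : ℚ)), x e := by
    rw [Finset.sum_congr rfl fun e _ => hdeq e, Finset.sum_add_distrib]
    congr 1
    · rw [Finset.sum_neg_distrib]
      congr 1
      rw [Finset.sum_boole]
    · rw [Finset.sum_filter]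
  have hZnn : 0 ≤ ∑ e ∈ Finset.univ.filter (fun e => x e = (π e : ℚ)), x e :=
    Finset.sum_nonneg fun e _ => hx0 e
  have hfrac : (1 / (πmin : ℚ)) * ∑ e ∈ Finset.univ.filter (fun e => x e = (π e : ℚ)), x e
      ≤ ∑ e ∈ Finset.univ.filter (fun e => x e = (π e : ℚ)), x e := by
    have h1 : 1 / (πmin : ℚ) ≤ 1 := by
      rw [div_le_one (by linarith)]; exact hπq
    nlinarith
  have hdnn : 0 ≤ ∑ e, d e := by
    rw [hsd]
    linarith
  linarith [hsumkey, hsplit ▸ hsumkey]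
end

section
/- Let x* ∈ ℚ^E be a nonnegative vector with integer bounds π_e ∈ ℕ≥1, and ρ ∈ (0,1) with ρ·π_min ≥ 1. Partition E into X = {e : 0 < x*_e < ρ·π_min}, Y = {e : ρ·π_min ≤ x*_e < π_e}, Z = {e : x*_e = π_e}, and E₀ = {e : x*_e = 0}. Assume |X| ≤ (1/π_min)·Σ_{e∈Z} x*_e. Then Σ_{e∈E} ⌈x*_e⌉ ≤ (1 + 1/(ρ·π_min)) · Σ_{e∈E} x*_e. -/
/-!
Rounding an entry up costs at most `1`. On `Z` it costs nothing, since `x_e = π_e` is an integer;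
an entry `x_e ≥ c := ρ·π_min` pays for its rounding with its own mass `x_e / c ≥ 1`; and the small
positive entries (the set `X`) are paid for by the mass on `Z`, by the hypothesis on `|X|`.
-/

open Finset

section CeilBound

variable {K : Type*} [Field K] [LinearOrder K] [IsStrictOrderedRing K] [FloorRing K]

theorem Int.ceil_le_add_ite_add_div {a c : K} (ha : 0 ≤ a) (hc : 0 < c) :
    (⌈a⌉ : K) ≤ a + (if 0 < a ∧ a < c then 1 else 0) + a / c := by
  have hceil := Int.ceil_lt_add_one a
  have hdiv : 0 ≤ a / c := div_nonneg ha hc.le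
  rcases ha.eq_or_lt with rfl | hpos
  · simp
  rcases lt_or_ge a c with hlt | hge
  · rw [if_pos ⟨hpos, hlt⟩]
    linarith
  · have : 1 ≤ a / c := (one_le_div hc).mpr hge
    rw [if_neg fun h => h.2.not_ge hge]
    linarith

theorem sum_ceil_le_one_add_inv_mul_sum {ι : Type*} [Fintype ι] (f : ι → K) (hf : ∀ i, 0 ≤ f i)
    (Z : Finset ι) (hZ : ∀ i ∈ Z, (⌈f i⌉ : K) = f i) {c : K} (hc : 0 < c)
    (hsmall : (#{i | 0 < f i ∧ f i < c} : K) ≤ 1 / c * ∑ i ∈ Z, f i) :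
    ∑ i, (⌈f i⌉ : K) ≤ (1 + 1 / c) * ∑ i, f i := by
  classical
  -- Rounding is free on `Z`, so there `f i / c` moves to the left, where it later pays for `X`.
  have pointwise : ∀ i, (⌈f i⌉ : K) + (if i ∈ Z then f i / c else 0) ≤
      f i + (if 0 < f i ∧ f i < c then 1 else 0) + f i / c := by
    intro i
    by_cases hi : i ∈ Z
    · rw [if_pos hi, hZ i hi]
      split_ifs <;> linarith
    · rw [if_neg hi, add_zero]
      exact Int.ceil_le_add_ite_add_div (hf i) hc
  have hsum := Finset.sum_le_sum fun i (_ : i ∈ univ) => pointwise i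
  simp only [sum_add_distrib, sum_ite_mem, univ_inter, sum_boole, ← sum_div] at hsum
  rw [one_div_mul_eq_div] at hsmall
  rw [add_mul, one_mul, one_div_mul_eq_div]
  linarith

end CeilBound

theorem stmt9_general {E : Type*} [Fintype E] (x : E → ℚ) (π : E → ℕ) (πmin : ℕ)
    (hx0 : ∀ e, 0 ≤ x e)
    (ρ : ℚ) (hρ1 : ρ < 1) (hbig : (1 : ℚ) ≤ ρ * (πmin : ℚ))
    (hX : ((Finset.univ.filter fun e => 0 < x e ∧ x e < ρ * (πmin : ℚ)).card : ℚ) ≤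
        (1 / (πmin : ℚ)) * ∑ e ∈ Finset.univ.filter (fun e => x e = (π e : ℚ)), x e) :
    (∑ e, ((⌈x e⌉ : ℤ) : ℚ)) ≤ (1 + 1 / (ρ * (πmin : ℚ))) * ∑ e, x e := by
  have hc : 0 < ρ * πmin := zero_lt_one.trans_le hbig
  have hcπ : ρ * πmin ≤ πmin := mul_le_of_le_one_left (Nat.cast_nonneg _) hρ1.le
  refine sum_ceil_le_one_add_inv_mul_sum x hx0 {e | x e = (π e : ℚ)} (fun e he => ?_) hc
    (hX.trans ?_)
  · rw [(mem_filter.mp he).2, Int.ceil_natCast, Int.cast_natCast]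
  · gcongr
    exact sum_nonneg fun e _ => hx0 e

/-- Rounding bound for basic LP solutions, case ρ·π_min ≥ 1. -/
theorem stmt9 {E : Type*} [Fintype E] (x : E → ℚ) (π : E → ℕ) (πmin : ℕ)
    (hx0 : ∀ e, 0 ≤ x e) (hxub : ∀ e, x e ≤ (π e : ℚ))
    (hπ1 : ∀ e, 1 ≤ π e) (hπmin : ∀ e, πmin ≤ π e) (hπmin1 : 1 ≤ πmin)
    (ρ : ℚ) (hρ0 : 0 < ρ) (hρ1 : ρ < 1) (hbig : (1 : ℚ) ≤ ρ * (πmin : ℚ))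
    (hX : ((Finset.univ.filter fun e => 0 < x e ∧ x e < ρ * (πmin : ℚ)).card : ℚ) ≤
        (1 / (πmin : ℚ)) * ∑ e ∈ Finset.univ.filter (fun e => x e = (π e : ℚ)), x e) :
    (∑ e, ((⌈x e⌉ : ℤ) : ℚ)) ≤ (1 + 1 / (ρ * (πmin : ℚ))) * ∑ e, x e :=
  stmt9_general x π πmin hx0 ρ hρ1 hbig hX
end

section
/- Let F = {f_{s,t}} be a feasible MCF routing a traffic matrix T in a capacitated digraph (A,cap), and for each arc uv ∈ A with positive aggregate flow 𝐟(uv) = Σ_{(s,t)} f_{s,t}(uv) > 0, let {g_{u,v}} be flows routing demands 𝐟(uv) from u to v in a second capacitated digraph (A',cap') such that Σ_{uv} g_{u,v}(a) ≤ cap'(a) for all a ∈ A'. Then the composed family h_{s,t}(a) := Σ_{uv: 𝐟(uv)>0} (f_{s,t}(uv)/𝐟(uv)) · g_{u,v}(a) is a feasible MCF routing T in (A',cap'). -/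
open Finset

/-- Flow conservation: `f` is a flow for commodity `(s,t)` with demand `d`
on the digraph with arc predicate `A`. -/
def conserves {V : Type*} [Fintype V] [DecidableEq V] (A : V → V → Prop) [DecidableRel A]
    (f : V → V → ℚ) (s t : V) (d : ℚ) : Prop :=
  ∀ v : V,
    ((∑ u : V, if A u v then f u v else 0) - (∑ u : V, if A v u then f v u else 0)) =
      if v = s then -d else if v = t then d else 0

/-- A traffic matrix `T` is MCF-routable in the capacitated digraph `(A, cap)`. -/
def MCFRoutable {V : Type*} [Fintype V] [DecidableEq V] (A : V → V → Prop) [DecidableRel A]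
    (cap : V → V → ℚ) (T : V → V → ℚ) : Prop :=
  ∃ f : V → V → V → V → ℚ,
    (∀ s t u v, 0 ≤ f s t u v) ∧
    (∀ s t u v, ¬ A u v → f s t u v = 0) ∧
    (∀ s t, conserves A (fun u v => f s t u v) s t (T s t)) ∧
    (∀ u v, A u v → (∑ p : V × V, f p.1 p.2 u v) ≤ cap u v)

/-- Flow composition: composing a feasible MCF `f` routing `T` in `(A, cap)` with flows
`g u v` routing the aggregate demands `F u v` in `(A', cap')` yields a feasible MCF
routing `T` in `(A', cap')`. -/
theorem stmt13 {V : Type*} [Fintype V] [DecidableEq V] (A A' : V → V → Prop)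
    [DecidableRel A] [DecidableRel A'] (cap cap' : V → V → ℚ) (T : V → V → ℚ)
    (f : V → V → V → V → ℚ)
    (hf0 : ∀ s t u v, 0 ≤ f s t u v) (hfA : ∀ s t u v, ¬ A u v → f s t u v = 0)
    (hfc : ∀ s t, conserves A (fun u v => f s t u v) s t (T s t))
    (hfcap : ∀ u v, A u v → (∑ p : V × V, f p.1 p.2 u v) ≤ cap u v)
    (F : V → V → ℚ) (hF : ∀ u v, F u v = ∑ p : V × V, f p.1 p.2 u v)
    (g : V → V → V → V → ℚ)
    (hg0 : ∀ u v w z, 0 ≤ g u v w z) (hgA : ∀ u v w z, ¬ A' w z → g u v w z = 0)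
    (hgc : ∀ u v, A u v → 0 < F u v → conserves A' (fun w z => g u v w z) u v (F u v))
    (hgcap : ∀ a b, A' a b →
      (∑ pr ∈ Finset.univ.filter (fun pr : V × V => A pr.1 pr.2 ∧ 0 < F pr.1 pr.2),
          g pr.1 pr.2 a b) ≤ cap' a b) :
    (∀ s t w z, 0 ≤
        ∑ pr ∈ Finset.univ.filter (fun pr : V × V => A pr.1 pr.2 ∧ 0 < F pr.1 pr.2),
          (f s t pr.1 pr.2 / F pr.1 pr.2) * g pr.1 pr.2 w z) ∧
    (∀ s t w z, ¬ A' w z →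
        (∑ pr ∈ Finset.univ.filter (fun pr : V × V => A pr.1 pr.2 ∧ 0 < F pr.1 pr.2),
          (f s t pr.1 pr.2 / F pr.1 pr.2) * g pr.1 pr.2 w z) = 0) ∧
    (∀ s t, conserves A'
        (fun w z =>
          ∑ pr ∈ Finset.univ.filter (fun pr : V × V => A pr.1 pr.2 ∧ 0 < F pr.1 pr.2),
            (f s t pr.1 pr.2 / F pr.1 pr.2) * g pr.1 pr.2 w z)
        s t (T s t)) ∧
    (∀ w z, A' w z →
        (∑ p : V × V,
          ∑ pr ∈ Finset.univ.filter (fun pr : V × V => A pr.1 pr.2 ∧ 0 < F pr.1 pr.2),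
            (f p.1 p.2 pr.1 pr.2 / F pr.1 pr.2) * g pr.1 pr.2 w z) ≤ cap' w z) := by
  classical
  have hFnn : ∀ u v, 0 ≤ F u v := by
    intro u v; rw [hF]
    exact Finset.sum_nonneg (fun p _ => hf0 p.1 p.2 u v)
  have hfz : ∀ s t u v, ¬ (0 < F u v) → f s t u v = 0 := by
    intro s t u v h
    have hFe : (∑ p : V × V, f p.1 p.2 u v) = 0 := by
      rw [← hF]; exact le_antisymm (not_lt.1 h) (hFnn u v)
    exact (Finset.sum_eq_zero_iff_of_nonneg (fun p _ => hf0 p.1 p.2 u v)).1 hFe (s, t)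
      (Finset.mem_univ _)
  have hdiag : ∀ u, A u u → 0 < F u u → False := by
    intro u hA hpos
    have hc := hgc u u hA hpos
    have hsum : ∑ v : V, (((∑ w : V, if A' w v then g u u w v else 0)
        - (∑ w : V, if A' v w then g u u v w else 0))) = 0 := by
      rw [Finset.sum_sub_distrib, Finset.sum_comm]
      ring
    rw [Finset.sum_congr rfl (fun v _ => hc v)] at hsum
    have heq : ∀ v : V, (if v = u then -F u u else if v = u then F u u else 0)
        = (if v = u then -F u u else 0) := by
      intro v; by_cases h : v = u <;> simp [h]
    rw [Finset.sum_congr rfl (fun v _ => heq v),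
      Finset.sum_ite_eq' Finset.univ u (fun _ => -F u u)] at hsum
    simp at hsum
    exact absurd hsum (ne_of_gt hpos)
  have hfdiag : ∀ s t v, f s t v v = 0 := by
    intro s t v
    by_cases hA : A v v
    · by_cases hp : 0 < F v v
      · exact absurd (hdiag v hA hp) (fun h => h)
      · exact hfz s t v v hp
    · exact hfA s t v v hA
  refine ⟨?_, ?_, ?_, ?_⟩
  · intro s t w z
    refine Finset.sum_nonneg (fun pr hpr => ?_)
    simp only [Finset.mem_filter] at hpr
    exact mul_nonneg (div_nonneg (hf0 s t pr.1 pr.2) (le_of_lt hpr.2.2))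
      (hg0 pr.1 pr.2 w z)
  · intro s t w z hA'
    refine Finset.sum_eq_zero (fun pr _ => ?_)
    rw [hgA pr.1 pr.2 w z hA', mul_zero]
  · intro s t v
    have hswap : ∀ w z : V, (if A' w z then
        ∑ pr ∈ Finset.univ.filter (fun pr : V × V => A pr.1 pr.2 ∧ 0 < F pr.1 pr.2),
          (f s t pr.1 pr.2 / F pr.1 pr.2) * g pr.1 pr.2 w z else 0)
        = ∑ pr ∈ Finset.univ.filter (fun pr : V × V => A pr.1 pr.2 ∧ 0 < F pr.1 pr.2),
          (f s t pr.1 pr.2 / F pr.1 pr.2) * (if A' w z then g pr.1 pr.2 w z else 0) := by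
      intro w z; by_cases h : A' w z <;> simp [h]
    simp only [hswap, ← Finset.sum_sub_distrib]
    rw [Finset.sum_comm]
    have hstep : ∀ pr ∈ Finset.univ.filter (fun pr : V × V => A pr.1 pr.2 ∧ 0 < F pr.1 pr.2),
        (∑ u : V, ((f s t pr.1 pr.2 / F pr.1 pr.2) * (if A' u v then g pr.1 pr.2 u v else 0)
        - (f s t pr.1 pr.2 / F pr.1 pr.2) * (if A' v u then g pr.1 pr.2 v u else 0)))
        = (if v = pr.1 then -(f s t pr.1 pr.2) else if v = pr.2 then f s t pr.1 pr.2 else 0) := by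
      intro pr hpr
      simp only [Finset.mem_filter] at hpr
      have hc := hgc pr.1 pr.2 hpr.2.1 hpr.2.2 v
      rw [Finset.sum_sub_distrib, ← Finset.mul_sum, ← Finset.mul_sum, ← mul_sub, hc]
      have hFne : F pr.1 pr.2 ≠ 0 := ne_of_gt hpr.2.2
      split
      · rw [mul_neg, div_mul_cancel₀ _ hFne]
      · split
        · rw [div_mul_cancel₀ _ hFne]
        · rw [mul_zero]
    rw [Finset.sum_congr rfl hstep]
    rw [Finset.sum_subset (Finset.filter_subset _ _) ?side]
    case side =>
      intro pr _ hpr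
      simp only [Finset.mem_filter, Finset.mem_univ, true_and, not_and, not_lt] at hpr
      have hfz' : f s t pr.1 pr.2 = 0 := by
        by_cases hA : A pr.1 pr.2
        · exact hfz s t pr.1 pr.2 (not_lt.2 (hpr hA))
        · exact hfA s t pr.1 pr.2 hA
      rw [hfz']; simp
    rw [Fintype.sum_prod_type]
    have hinner : ∀ a : V, (∑ b : V,
        (if v = a then -(f s t a b) else if v = b then f s t a b else 0))
        = (f s t a v + (if a = v then (-(∑ b : V, f s t v b) - f s t v v) else 0)) := by
      intro a
      by_cases hav : a = v
      · subst hav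
        simp [hfdiag]
      · have : (v = a) = False := by simp [Ne.symm hav]
        simp only [this, if_false, hav, if_false, add_zero]
        rw [Finset.sum_ite_eq (Finset.univ) v (fun b => f s t a b)]
        simp
    rw [Finset.sum_congr rfl (fun a _ => hinner a), Finset.sum_add_distrib,
      Finset.sum_ite_eq' (Finset.univ) v]
    simp only [Finset.mem_univ, if_true, hfdiag, sub_zero]
    have hfc' := hfc s t v
    have e1 : (∑ u : V, if A u v then f s t u v else 0) = ∑ u : V, f s t u v := by
      refine Finset.sum_congr rfl (fun u _ => ?_)
      split
      · rfl
      · rw [hfA s t u v (by assumption)]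
    have e2 : (∑ u : V, if A v u then f s t v u else 0) = ∑ u : V, f s t v u := by
      refine Finset.sum_congr rfl (fun u _ => ?_)
      split
      · rfl
      · rw [hfA s t v u (by assumption)]
    rw [e1, e2] at hfc'
    rw [← hfc']
    ring
  · intro w z hA'
    rw [Finset.sum_comm]
    have : ∀ pr ∈ Finset.univ.filter (fun pr : V × V => A pr.1 pr.2 ∧ 0 < F pr.1 pr.2),
        (∑ p : V × V, (f p.1 p.2 pr.1 pr.2 / F pr.1 pr.2) * g pr.1 pr.2 w z)
        = g pr.1 pr.2 w z := by
      intro pr hpr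
      simp only [Finset.mem_filter] at hpr
      have hFne : F pr.1 pr.2 ≠ 0 := ne_of_gt hpr.2.2
      rw [← Finset.sum_mul]
      have : (∑ p : V × V, f p.1 p.2 pr.1 pr.2 / F pr.1 pr.2)
          = (∑ p : V × V, f p.1 p.2 pr.1 pr.2) / F pr.1 pr.2 := by
        rw [Finset.sum_div]
      rw [this, ← hF, div_self hFne, one_mul]
    rw [Finset.sum_congr rfl this]
    exact hgcap w z hA'
end
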